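/- (Theorem 2, ergodic O(1/t) rate) Suppose that for every k with 0 ≤ k ≤ t the ADMM optimality conditions hold: (i) for all z ∈ Z, θ1(z) − θ1(z^{k+1}) + ⟨z − z^{k+1}, λ^k − β(Dx^k − z^{k+1})⟩ ≥ 0; (ii) for all x ∈ X, θ2(x) − θ2(x^{k+1}) + ⟨x − x^{k+1}, −Dᵀλ^k + βDᵀ(Dx^{k+1} − z^{k+1})⟩ ≥ 0; (iii) λ^{k+1} = λ^k − β(Dx^{k+1} − z^{k+1}). Define the ergodic averages z^t̄ = (1/(t+1))∑_{k=0}^{t} z^{k+1}, x^t̄ = (1/(t+1))∑_{k=0}^{t} x^{k+1}, λ^t̄ = (1/(t+1))∑_{k=0}^{t} λ^{k+1}, and ω^t̄ = (z^t̄, x^t̄, λ^t̄). Then for every ω = (z, x, λ) ∈ Z × X × R^n, θ1(z^t̄) + θ2(x^t̄) − θ1(z) − θ2(x) + ⟨ω^t̄ − ω, F(ω)⟩ ≤ (1/(2(t+1)))[(1/β)‖λ^0 − λ‖₂² + β‖Dx^0 − z‖₂²]. -/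

import Mathlib

open scoped RealInnerProductSpace

/-- Matrix-vector multiplication, landing in Euclidean space. -/
noncomputable def mulv {n d : ℕ} (A : Matrix (Fin n) (Fin d) ℝ)
    (x : EuclideanSpace ℝ (Fin d)) : EuclideanSpace ℝ (Fin n) := WithLp.toLp 2 (A.mulVec x)

/-- `θ₁(z) = ‖z‖₁`, the sum of absolute values of the entries of `z`. -/
noncomputable def theta1 {n : ℕ} (z : EuclideanSpace ℝ (Fin n)) : ℝ := ∑ i, |z i|

/-- `θ₂(x) = (α/2)‖y − Mx‖₂²`. -/
noncomputable def theta2 {m d : ℕ} (M : Matrix (Fin m) (Fin d) ℝ)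
    (y : EuclideanSpace ℝ (Fin m)) (α : ℝ) (x : EuclideanSpace ℝ (Fin d)) : ℝ :=
  α / 2 * ‖y - mulv M x‖ ^ 2

lemma mulv_adj {n d : ℕ} (A : Matrix (Fin n) (Fin d) ℝ)
    (x : EuclideanSpace ℝ (Fin d)) (w : EuclideanSpace ℝ (Fin n)) :
    ⟪x, mulv A.transpose w⟫ = ⟪mulv A x, w⟫ := by
  simp [mulv, Matrix.mulVec, dotProduct, PiLp.inner_apply, RCLike.inner_apply,
    Finset.mul_sum, Finset.sum_mul]
  rw [Finset.sum_comm]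
  congr 1; ext j; congr 1; ext i; ring

lemma mulv_sub {n d : ℕ} (A : Matrix (Fin n) (Fin d) ℝ)
    (x x' : EuclideanSpace ℝ (Fin d)) : mulv A (x - x') = mulv A x - mulv A x' := by
  ext i
  simp [mulv, Matrix.mulVec, dotProduct, mul_sub, Finset.sum_sub_distrib]

lemma euc_sum_apply {d : ℕ} (s : Finset ℕ) (f : ℕ → EuclideanSpace ℝ (Fin d)) (i : Fin d) :
    (∑ k ∈ s, f k) i = ∑ k ∈ s, f k i := by
  induction s using Finset.cons_induction with
  | empty => rfl
  | cons a s ha ih => rw [Finset.sum_cons, Finset.sum_cons, PiLp.add_apply, ih]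

lemma mulv_sum {n d : ℕ} (A : Matrix (Fin n) (Fin d) ℝ) (s : Finset ℕ)
    (f : ℕ → EuclideanSpace ℝ (Fin d)) :
    mulv A (∑ k ∈ s, f k) = ∑ k ∈ s, mulv A (f k) := by
  ext i
  rw [euc_sum_apply]
  simp only [mulv, Matrix.mulVec, dotProduct, euc_sum_apply, Finset.mul_sum]
  rw [Finset.sum_comm]

lemma mulv_smul {n d : ℕ} (A : Matrix (Fin n) (Fin d) ℝ) (c : ℝ)
    (x : EuclideanSpace ℝ (Fin d)) : mulv A (c • x) = c • mulv A x := by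
  ext i
  simp only [mulv, Matrix.mulVec, dotProduct, PiLp.smul_apply, smul_eq_mul,
    Finset.mul_sum]
  congr 1; ext j; ring

lemma key_step {E : Type*} [NormedAddCommGroup E] [InnerProductSpace ℝ E] {β : ℝ} (hβ : 0 < β)
    (lam lamk zz z1 dx dxk dxk1 : E) :
    ⟪z1 - zz, lam⟫ - ⟪dxk1 - dx, lam⟫ + ⟪(lamk - β•(dxk1 - z1)) - lam, dx - zz⟫
      + ⟪zz - z1, lamk - β•(dxk - z1)⟫ - ⟪dx - dxk1, lamk⟫ + β*⟪dx - dxk1, dxk1 - z1⟫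
    ≤ (1/(2*β))*(‖lamk - lam‖^2 - ‖(lamk - β•(dxk1 - z1)) - lam‖^2)
      + (β/2)*(‖dxk - zz‖^2 - ‖dxk1 - zz‖^2) := by
  have hid : (1/(2*β))*(‖lamk - lam‖^2 - ‖(lamk - β•(dxk1 - z1)) - lam‖^2)
      + (β/2)*(‖dxk - zz‖^2 - ‖dxk1 - zz‖^2)
      - (⟪z1 - zz, lam⟫ - ⟪dxk1 - dx, lam⟫ + ⟪(lamk - β•(dxk1 - z1)) - lam, dx - zz⟫
      + ⟪zz - z1, lamk - β•(dxk - z1)⟫ - ⟪dx - dxk1, lamk⟫ + β*⟪dx - dxk1, dxk1 - z1⟫)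
      = (β/2) * ‖dxk - z1‖^2 := by
    simp only [← real_inner_self_eq_norm_sq, inner_sub_left, inner_sub_right,
      real_inner_smul_left, real_inner_smul_right,
      real_inner_comm lamk lam, real_inner_comm zz lam, real_inner_comm z1 lam,
      real_inner_comm dx lam, real_inner_comm dxk lam, real_inner_comm dxk1 lam,
      real_inner_comm zz lamk, real_inner_comm z1 lamk, real_inner_comm dx lamk,
      real_inner_comm dxk lamk, real_inner_comm dxk1 lamk,
      real_inner_comm z1 zz, real_inner_comm dx zz, real_inner_comm dxk zz,
      real_inner_comm dxk1 zz,
      real_inner_comm dx z1, real_inner_comm dxk z1, real_inner_comm dxk1 z1,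
      real_inner_comm dxk dx, real_inner_comm dxk1 dx,
      real_inner_comm dxk1 dxk]
    field_simp
    ring
  nlinarith [sq_nonneg ‖dxk - z1‖, hβ.le, mul_nonneg hβ.le (sq_nonneg ‖dxk - z1‖)]

lemma theta1_avg {n : ℕ} (N : ℕ) (f : ℕ → EuclideanSpace ℝ (Fin n)) :
    theta1 ((N:ℝ)⁻¹ • ∑ k ∈ Finset.range N, f k)
      ≤ (N:ℝ)⁻¹ * ∑ k ∈ Finset.range N, theta1 (f k) := by
  have hc : (0:ℝ) ≤ (N:ℝ)⁻¹ := by positivity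
  simp only [theta1, Finset.mul_sum]
  rw [Finset.sum_comm]
  apply Finset.sum_le_sum
  intro i _
  rw [PiLp.smul_apply, smul_eq_mul, abs_mul, abs_of_nonneg hc, euc_sum_apply]
  rw [← Finset.mul_sum]
  exact mul_le_mul_of_nonneg_left (Finset.abs_sum_le_sum_abs _ _) hc

lemma avg_norm_sq {n : ℕ} (N : ℕ) (v : ℕ → EuclideanSpace ℝ (Fin n)) :
    ‖(N:ℝ)⁻¹ • ∑ k ∈ Finset.range N, v k‖ ^ 2
      ≤ (N:ℝ)⁻¹ * ∑ k ∈ Finset.range N, ‖v k‖ ^ 2 := by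
  have h1 : ‖∑ k ∈ Finset.range N, v k‖ ^ 2 ≤ (N:ℝ) * ∑ k ∈ Finset.range N, ‖v k‖ ^ 2 := by
    calc ‖∑ k ∈ Finset.range N, v k‖ ^ 2 ≤ (∑ k ∈ Finset.range N, ‖v k‖) ^ 2 := by
          apply pow_le_pow_left₀ (norm_nonneg _) (norm_sum_le _ _)
      _ ≤ (N:ℝ) * ∑ k ∈ Finset.range N, ‖v k‖ ^ 2 := by
          have := sq_sum_le_card_mul_sum_sq (s := Finset.range N) (f := fun k => ‖v k‖)
          simpa using this
  rw [norm_smul]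
  have h2 : (‖(N:ℝ)⁻¹‖ * ‖∑ k ∈ Finset.range N, v k‖)^2
      = (N:ℝ)⁻¹ * ((N:ℝ)⁻¹ * ‖∑ k ∈ Finset.range N, v k‖^2) := by
    rw [Real.norm_eq_abs, abs_of_nonneg (by positivity)]; ring
  rw [h2]
  apply mul_le_mul_of_nonneg_left _ (by positivity)
  rcases Nat.eq_zero_or_pos N with h | h
  · subst h; simp
  · have hN' : (0:ℝ) < (N:ℝ) := by exact_mod_cast h
    calc (N:ℝ)⁻¹ * ‖∑ k ∈ Finset.range N, v k‖^2
        ≤ (N:ℝ)⁻¹ * ((N:ℝ) * ∑ k ∈ Finset.range N, ‖v k‖ ^ 2) :=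
          mul_le_mul_of_nonneg_left h1 (by positivity)
      _ = ∑ k ∈ Finset.range N, ‖v k‖ ^ 2 := by field_simp

lemma theta2_avg {m d : ℕ} (M : Matrix (Fin m) (Fin d) ℝ) (y : EuclideanSpace ℝ (Fin m))
    (α : ℝ) (hα : 0 ≤ α) (N : ℕ) (hN : 0 < N) (f : ℕ → EuclideanSpace ℝ (Fin d)) :
    theta2 M y α ((N:ℝ)⁻¹ • ∑ k ∈ Finset.range N, f k)
      ≤ (N:ℝ)⁻¹ * ∑ k ∈ Finset.range N, theta2 M y α (f k) := by
  have hN' : (0:ℝ) < (N:ℝ) := by exact_mod_cast hN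
  have hy : y - mulv M ((N:ℝ)⁻¹ • ∑ k ∈ Finset.range N, f k)
      = (N:ℝ)⁻¹ • ∑ k ∈ Finset.range N, (y - mulv M (f k)) := by
    rw [mulv_smul, mulv_sum, Finset.sum_sub_distrib, Finset.sum_const, Finset.card_range,
      smul_sub, ← Nat.cast_smul_eq_nsmul ℝ, smul_smul, inv_mul_cancel₀ hN'.ne', one_smul]
  rw [theta2, hy]
  calc α / 2 * ‖(N:ℝ)⁻¹ • ∑ k ∈ Finset.range N, (y - mulv M (f k))‖ ^ 2
      ≤ α / 2 * ((N:ℝ)⁻¹ * ∑ k ∈ Finset.range N, ‖y - mulv M (f k)‖ ^ 2) := by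
        apply mul_le_mul_of_nonneg_left (avg_norm_sq N _) (by positivity)
    _ = (N:ℝ)⁻¹ * ∑ k ∈ Finset.range N, theta2 M y α (f k) := by
        simp only [theta2, Finset.mul_sum]
        apply Finset.sum_congr rfl
        intro k _
        ring

lemma inner_avg {n : ℕ} (N : ℕ) (hN : 0 < N) (f : ℕ → EuclideanSpace ℝ (Fin n))
    (a w : EuclideanSpace ℝ (Fin n)) :
    ⟪(N:ℝ)⁻¹ • (∑ k ∈ Finset.range N, f k) - a, w⟫
      = (N:ℝ)⁻¹ * ∑ k ∈ Finset.range N, ⟪f k - a, w⟫ := by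
  have hN' : (0:ℝ) < (N:ℝ) := by exact_mod_cast hN
  simp only [inner_sub_left, sum_inner, real_inner_smul_left, Finset.sum_sub_distrib,
    Finset.sum_const, Finset.card_range, nsmul_eq_mul]
  field_simp

/-- Theorem 2 (ergodic `O(1/t)` convergence rate): the ergodic averages
`ω̄ᵗ = (1/(t+1)) ∑_{k=0}^t ω^{k+1}` satisfy the variational-inequality bound
`θ(ūᵗ) − θ(u) + ⟨ω̄ᵗ − ω, F(ω)⟩ ≤ (1/(2(t+1)))[(1/β)‖λ⁰ − λ‖² + β‖Dx⁰ − z‖²]`. -/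
theorem stmt_12 {n d m : ℕ} (D : Matrix (Fin n) (Fin d) ℝ) (M : Matrix (Fin m) (Fin d) ℝ)
    (y : EuclideanSpace ℝ (Fin m)) (α β : ℝ) (hα : 0 < α) (hβ : 0 < β)
    (Z : Set (EuclideanSpace ℝ (Fin n))) (X : Set (EuclideanSpace ℝ (Fin d)))
    (hZ : Convex ℝ Z) (hX : Convex ℝ X)
    (zseq : ℕ → EuclideanSpace ℝ (Fin n)) (xseq : ℕ → EuclideanSpace ℝ (Fin d))
    (lseq : ℕ → EuclideanSpace ℝ (Fin n)) (t : ℕ)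
    (hzZ : ∀ k ≤ t + 1, zseq k ∈ Z) (hxX : ∀ k ≤ t + 1, xseq k ∈ X)
    (h1 : ∀ k ≤ t, ∀ z ∈ Z, theta1 z - theta1 (zseq (k + 1)) +
      ⟪z - zseq (k + 1), lseq k - β • (mulv D (xseq k) - zseq (k + 1))⟫ ≥ 0)
    (h2 : ∀ k ≤ t, ∀ x ∈ X, theta2 M y α x - theta2 M y α (xseq (k + 1)) +
      ⟪x - xseq (k + 1), -(mulv D.transpose (lseq k)) +
        β • mulv D.transpose (mulv D (xseq (k + 1)) - zseq (k + 1))⟫ ≥ 0)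
    (h3 : ∀ k ≤ t, lseq (k + 1) = lseq k - β • (mulv D (xseq (k + 1)) - zseq (k + 1))) :
    ∀ z ∈ Z, ∀ x ∈ X, ∀ l : EuclideanSpace ℝ (Fin n),
      theta1 ((((t : ℝ) + 1)⁻¹) • ∑ k ∈ Finset.range (t + 1), zseq (k + 1)) +
          theta2 M y α ((((t : ℝ) + 1)⁻¹) • ∑ k ∈ Finset.range (t + 1), xseq (k + 1)) -
          theta1 z - theta2 M y α x +
        (⟪(((t : ℝ) + 1)⁻¹) • (∑ k ∈ Finset.range (t + 1), zseq (k + 1)) - z, l⟫ +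
          ⟪(((t : ℝ) + 1)⁻¹) • (∑ k ∈ Finset.range (t + 1), xseq (k + 1)) - x,
            -(mulv D.transpose l)⟫ +
          ⟪(((t : ℝ) + 1)⁻¹) • (∑ k ∈ Finset.range (t + 1), lseq (k + 1)) - l,
            mulv D x - z⟫) ≤
      (1 / (2 * ((t : ℝ) + 1))) *
        ((1 / β) * ‖lseq 0 - l‖ ^ 2 + β * ‖mulv D (xseq 0) - z‖ ^ 2) := by
  intro z hz x hx l
  have ht0 : ((t : ℝ) + 1) ≠ 0 := by positivity
  have hc : (0:ℝ) ≤ ((t : ℝ) + 1)⁻¹ := by positivity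
  have hN : 0 < t + 1 := Nat.succ_pos t
  -- per-step bound
  have hA : ∀ k ∈ Finset.range (t+1),
      (theta1 (zseq (k+1)) - theta1 z) + (theta2 M y α (xseq (k+1)) - theta2 M y α x)
      + ⟪zseq (k+1) - z, l⟫ + ⟪xseq (k+1) - x, -(mulv D.transpose l)⟫
      + ⟪lseq (k+1) - l, mulv D x - z⟫
      ≤ ((1/(2*β))*‖lseq k - l‖^2 + (β/2)*‖mulv D (xseq k) - z‖^2)
        - ((1/(2*β))*‖lseq (k+1) - l‖^2 + (β/2)*‖mulv D (xseq (k+1)) - z‖^2) := by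
    intro k hk
    have hk' : k ≤ t := Nat.lt_succ_iff.mp (Finset.mem_range.mp hk)
    have H1 := h1 k hk' z hz
    have H2 := h2 k hk' x hx
    have H3 := h3 k hk'
    have e1 : ⟪xseq (k+1) - x, -(mulv D.transpose l)⟫
        = -⟪mulv D (xseq (k+1)) - mulv D x, l⟫ := by
      rw [inner_neg_right, mulv_adj, mulv_sub]
    have e2 : ⟪x - xseq (k+1), -(mulv D.transpose (lseq k))
          + β • mulv D.transpose (mulv D (xseq (k+1)) - zseq (k+1))⟫
        = -⟪mulv D x - mulv D (xseq (k+1)), lseq k⟫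
          + β * ⟪mulv D x - mulv D (xseq (k+1)), mulv D (xseq (k+1)) - zseq (k+1)⟫ := by
      rw [inner_add_right, inner_neg_right, real_inner_smul_right, mulv_adj, mulv_adj,
        mulv_sub]
    rw [e2] at H2
    rw [e1, H3]
    have HK := key_step hβ l (lseq k) z (zseq (k+1)) (mulv D x) (mulv D (xseq k))
      (mulv D (xseq (k+1)))
    linarith [H1, H2, HK]
  -- summed bound
  have hsum : ∑ k ∈ Finset.range (t+1),
      ((theta1 (zseq (k+1)) - theta1 z) + (theta2 M y α (xseq (k+1)) - theta2 M y α x)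
      + ⟪zseq (k+1) - z, l⟫ + ⟪xseq (k+1) - x, -(mulv D.transpose l)⟫
      + ⟪lseq (k+1) - l, mulv D x - z⟫)
      ≤ (1/(2*β))*‖lseq 0 - l‖^2 + (β/2)*‖mulv D (xseq 0) - z‖^2 := by
    have tele := Finset.sum_range_sub'
      (fun k => (1/(2*β))*‖lseq k - l‖^2 + (β/2)*‖mulv D (xseq k) - z‖^2) (t+1)
    have hle := Finset.sum_le_sum hA
    have hnn : (0:ℝ) ≤ (1/(2*β))*‖lseq (t+1) - l‖^2 + (β/2)*‖mulv D (xseq (t+1)) - z‖^2 := by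
      positivity
    rw [tele] at hle
    linarith
  -- averaging
  have hT1 := theta1_avg (t+1) (fun k => zseq (k+1))
  have hT2 := theta2_avg M y α hα.le (t+1) hN (fun k => xseq (k+1))
  have hI1 := inner_avg (t+1) hN (fun k => zseq (k+1)) z l
  have hI2 := inner_avg (t+1) hN (fun k => xseq (k+1)) x (-(mulv D.transpose l))
  have hI3 := inner_avg (t+1) hN (fun k => lseq (k+1)) l (mulv D x - z)
  push_cast at hT1 hT2 hI1 hI2 hI3
  have hcN : ((t:ℝ)+1) * ((t:ℝ)+1)⁻¹ = 1 := mul_inv_cancel₀ ht0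
  have hexp : ((t:ℝ)+1)⁻¹ * ∑ k ∈ Finset.range (t+1),
      ((theta1 (zseq (k+1)) - theta1 z) + (theta2 M y α (xseq (k+1)) - theta2 M y α x)
      + ⟪zseq (k+1) - z, l⟫ + ⟪xseq (k+1) - x, -(mulv D.transpose l)⟫
      + ⟪lseq (k+1) - l, mulv D x - z⟫)
      = (((t:ℝ)+1)⁻¹ * ∑ k ∈ Finset.range (t+1), theta1 (zseq (k+1)) - theta1 z)
      + (((t:ℝ)+1)⁻¹ * ∑ k ∈ Finset.range (t+1), theta2 M y α (xseq (k+1)) - theta2 M y α x)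
      + (⟪(((t:ℝ)+1)⁻¹) • (∑ k ∈ Finset.range (t+1), zseq (k+1)) - z, l⟫
        + ⟪(((t:ℝ)+1)⁻¹) • (∑ k ∈ Finset.range (t+1), xseq (k+1)) - x, -(mulv D.transpose l)⟫
        + ⟪(((t:ℝ)+1)⁻¹) • (∑ k ∈ Finset.range (t+1), lseq (k+1)) - l, mulv D x - z⟫) := by
    rw [hI1, hI2, hI3]
    simp only [Finset.sum_add_distrib, Finset.sum_sub_distrib, Finset.sum_const,
      Finset.card_range, nsmul_eq_mul]
    push_cast
    field_simp
    ring
  have hmul := mul_le_mul_of_nonneg_left hsum hc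
  have hRHS : ((t:ℝ)+1)⁻¹ * ((1/(2*β))*‖lseq 0 - l‖^2 + (β/2)*‖mulv D (xseq 0) - z‖^2)
      = (1 / (2 * ((t : ℝ) + 1))) *
        ((1 / β) * ‖lseq 0 - l‖ ^ 2 + β * ‖mulv D (xseq 0) - z‖ ^ 2) := by
    field_simp
  linarith [hT1, hT2]
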